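/- arXiv:1912.09240 — 3 statements merged into one kernel-verified Lean document; each statement's English description precedes it below -/
import Mathlib

section
/- Exactness of the micro-macro parareal algorithm: assume the matching operator satisfies the strong projection property M(R(X), X) = X for all X ∈ D_X, and the iterator satisfies the consistency property J(a, b, a) = b for all a, b ∈ D_ρ. Then for every iteration k and every time index n with n ≤ k, the micro-macro parareal iterates satisfy X_k^n = F^[n](X₀) (the n-fold iterate of the fine propagator applied to X₀) and ρ_k^n = R(F^[n](X₀)). -/
/-- Exactness of the micro-macro parareal algorithm: if the matching operator
satisfies the strong projection property and the iterator satisfies the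
consistency property, then for all `n ≤ k`, `X k n = F^[n] X₀` and
`ρ k n = R (F^[n] X₀)`. -/
theorem micmac_parareal_exactness
    {DX Dρ : Type*} (F : DX → DX) (C : Dρ → Dρ) (R : DX → Dρ)
    (M : Dρ → DX → DX) (J : Dρ → Dρ → Dρ → Dρ)
    (X₀ : DX) (X : ℕ → ℕ → DX) (ρ : ℕ → ℕ → Dρ)
    (hX0 : ∀ k, X k 0 = X₀)
    (hρ0 : ∀ k, ρ k 0 = R X₀)
    (hρzero : ∀ n, ρ 0 (n + 1) = C (ρ 0 n))
    (hXzero : ∀ n, X 0 (n + 1) = M (ρ 0 (n + 1)) X₀)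
    (hρrec : ∀ k n, ρ (k + 1) (n + 1) =
      J (C (ρ (k + 1) n)) (R (F (X k n))) (C (R (X k n))))
    (hXrec : ∀ k n, X (k + 1) (n + 1) = M (ρ (k + 1) (n + 1)) (F (X k n)))
    (hM : ∀ Y : DX, M (R Y) Y = Y)
    (hJ : ∀ a b : Dρ, J a b a = b) :
    ∀ k n, n ≤ k → X k n = F^[n] X₀ ∧ ρ k n = R (F^[n] X₀) := by
  have key : ∀ n k, n ≤ k → X k n = F^[n] X₀ ∧ ρ k n = R (F^[n] X₀) := by
    intro n
    induction n with
    | zero => intro k _; simp [hX0, hρ0]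
    | succ n ih =>
      intro k hk
      obtain ⟨k', rfl⟩ : ∃ k', k = k' + 1 := ⟨k - 1, by omega⟩
      have hn : n ≤ k' := by omega
      obtain ⟨hX1, hρ1⟩ := ih (k' + 1) (by omega)
      obtain ⟨hX2, hρ2⟩ := ih k' hn
      have hρ' : ρ (k' + 1) (n + 1) = R (F^[n+1] X₀) := by
        rw [hρrec, hρ1, ← hX2, hJ, hX2, Function.iterate_succ_apply']
      refine ⟨?_, hρ'⟩
      rw [hXrec, hρ', Function.iterate_succ_apply', ← hX2, hM]
  exact fun k n h => key n k h
end

section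
/- Norm preservation of the rotation iterator: let H be a real inner product space and let a, b, c ∈ H be unit vectors (‖a‖ = ‖b‖ = ‖c‖ = 1). Set u = ⟨b, c⟩, v = ⟨b, a⟩ and w = ⟨c, a⟩, and assume w ≠ −1. Then the vector r = ((u + 2uw − v)/(1 + w)) • a + b − ((u + v)/(1 + w)) • c satisfies ‖r‖ = 1. -/
/-!
Reflecting in the line `ℝ (a + c)` and then in the line `ℝ a` is a linear isometry which, for
unit vectors, carries `c` to `a`: it is the rotation in the plane of `a` and `c`. The vector
`r` is exactly the image of `b` under this rotation, so `‖r‖ = ‖b‖ = 1`.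
-/

section

open Submodule RealInnerProductSpace

variable {F : Type*} [NormedAddCommGroup F] [InnerProductSpace ℝ F]

theorem reflection_span_add_apply_left {a c : F} (h : ‖a‖ = ‖c‖) :
    reflection (ℝ ∙ (a + c)) a = c := by
  set S := reflection (ℝ ∙ (a + c))
  have hsum : S (a + c) = a + c := reflection_mem_subspace_eq_self (mem_span_singleton_self _)
  have hdiff : S (a - c) = -(a - c) := by
    apply reflection_mem_subspace_orthogonalComplement_eq_neg
    rw [mem_orthogonal_singleton_iff_inner_right]
    exact (real_inner_add_sub_eq_zero_iff a c).mpr h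
  have htwice : (2 : ℝ) • S a = (2 : ℝ) • c := by
    calc (2 : ℝ) • S a = S (a + c) + S (a - c) := by rw [map_add, map_sub]; module
      _ = (2 : ℝ) • c := by rw [hsum, hdiff]; module
  exact smul_right_injective F two_ne_zero htwice

theorem reflection_span_add_apply {a c : F} (ha : ‖a‖ = 1) (hc : ‖c‖ = 1) (x : F) :
    reflection (ℝ ∙ (a + c)) x = (⟪a + c, x⟫ / (1 + ⟪c, a⟫)) • (a + c) - x := by
  have hnorm : ‖a + c‖ ^ 2 = 2 * (1 + ⟪c, a⟫) := by
    rw [norm_add_sq_real, ha, hc, real_inner_comm]; ring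
  have hcoeff : 2 * (⟪a + c, x⟫ / ‖a + c‖ ^ 2) = ⟪a + c, x⟫ / (1 + ⟪c, a⟫) := by
    rw [hnorm, ← mul_div_assoc, mul_div_mul_left _ _ two_ne_zero]
  rw [reflection_singleton_apply, RCLike.ofReal_real_eq_id, id, ← hcoeff]
  module

noncomputable def rotationFromTo (c a : F) : F ≃ₗᵢ[ℝ] F :=
  (reflection (ℝ ∙ (a + c))).trans (reflection (ℝ ∙ a))

theorem rotationFromTo_apply {a c : F} (ha : ‖a‖ = 1) (hc : ‖c‖ = 1) (x : F) :
    rotationFromTo c a x = x + (2 * ⟪c, x⟫) • a - (⟪a + c, x⟫ / (1 + ⟪c, a⟫)) • (a + c) := by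
  set S := reflection (ℝ ∙ (a + c))
  have hinner : ⟪a, S x⟫ = ⟪c, x⟫ := by
    rw [← reflection_span_add_apply_left (ha.trans hc.symm), ← LinearIsometryEquiv.inner_map_map S,
      reflection_reflection]
  show reflection (ℝ ∙ a) (S x) = _
  rw [reflection_singleton_apply, hinner, ha, reflection_span_add_apply ha hc]
  simp only [RCLike.ofReal_real_eq_id, id, one_pow, div_one]
  module

end

/-- Norm preservation of the rotation iterator: for unit vectors `a, b, c` in a real
inner product space, with `u = ⟨b, c⟩`, `v = ⟨b, a⟩`, `w = ⟨c, a⟩` and `w ≠ -1`, the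
vector `r = ((u + 2uw - v)/(1 + w)) • a + b - ((u + v)/(1 + w)) • c` has norm one. -/
theorem rotation_iterator_norm_preservation
    {H : Type*} [NormedAddCommGroup H] [InnerProductSpace ℝ H]
    (a b c : H) (ha : ‖a‖ = 1) (hb : ‖b‖ = 1) (hc : ‖c‖ = 1)
    (u v w : ℝ) (hu : u = inner ℝ b c) (hv : v = inner ℝ b a) (hw : w = inner ℝ c a)
    (hw1 : w ≠ -1) :
    ‖((u + 2 * u * w - v) / (1 + w)) • a + b - ((u + v) / (1 + w)) • c‖ = 1 := by
  have hcoeff : (u + 2 * u * w - v) / (1 + w) = 2 * u - (u + v) / (1 + w) := by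
    have : 1 + w ≠ 0 := fun h => hw1 (by linarith)
    field_simp
    ring
  have hrot : ((u + 2 * u * w - v) / (1 + w)) • a + b - ((u + v) / (1 + w)) • c
      = rotationFromTo c a b := by
    rw [rotationFromTo_apply ha hc, inner_add_left, real_inner_comm b a, real_inner_comm b c,
      ← hu, ← hv, ← hw, hcoeff, add_comm v u]
    module
  rw [hrot, LinearIsometryEquiv.norm_map, hb]
end

section
/- The piecewise-linear cdf built from a histogram is exact at the bin edges: let x : Fin (I+1) → ℝ be a strictly increasing grid, and let Z : Fin P → ℝ and W : Fin P → ℝ be particle positions and weights such that x(0) < Z(p) < x(I) and Z(p) ≠ x(i) for every particle p and grid point i. Define the histogram ρ(i) = Σ_{p : x(i) < Z(p) < x(i+1)} W(p) for i = 0, …, I−1. Then for every i ∈ {0, …, I}, Σ_{j < i} ρ(j) = Σ_{p : Z(p) < x(i)} W(p); that is, the cumulative histogram at each bin edge equals the empirical cumulative distribution function of the weighted ensemble evaluated at that edge. -/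
/-!
Since no particle sits on a grid point, the mass of bin `j` is `F (x (j+1)) - F (x j)` for the
empirical cdf `F`; the cumulative histogram therefore telescopes to `F (x i) - F (x 0)`, and
`F (x 0) = 0` because every particle lies to the right of `x 0`.
-/

open Finset

section EmpiricalCDF

variable {ι α M : Type*} [Fintype ι] [LinearOrder α]

noncomputable def empiricalCDF [AddCommMonoid M] (Z : ι → α) (W : ι → M) (t : α) : M :=
  ∑ p ∈ univ.filter (fun p => Z p < t), W p

theorem empiricalCDF_eq_zero_of_forall_le [AddCommMonoid M] (Z : ι → α) (W : ι → M) {t : α}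
    (ht : ∀ p, t ≤ Z p) : empiricalCDF Z W t = 0 :=
  sum_eq_zero fun p hp => absurd (mem_filter.1 hp).2 (not_lt.2 (ht p))

theorem empiricalCDF_add_sum_Ioo [AddCommMonoid M] (Z : ι → α) (W : ι → M) {a b : α}
    (hab : a ≤ b) (ha : ∀ p, Z p ≠ a) :
    empiricalCDF Z W a + ∑ p ∈ univ.filter (fun p => a < Z p ∧ Z p < b), W p =
      empiricalCDF Z W b := by
  classical
  rw [empiricalCDF, empiricalCDF, ← sum_union]
  · congr 1
    ext p
    simp only [mem_union, mem_filter, mem_univ, true_and]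
    rcases (ha p).lt_or_gt with h | h
    · exact ⟨fun _ => h.trans_le hab, fun _ => Or.inl h⟩
    · exact ⟨fun hp => hp.resolve_left h.not_gt |>.2, fun hb => Or.inr ⟨h, hb⟩⟩
  · exact disjoint_filter.2 fun p _ hlt hgt => hlt.not_gt hgt.1

theorem sum_filter_Ioo_eq_empiricalCDF_sub [AddCommGroup M] (Z : ι → α) (W : ι → M) {a b : α}
    (hab : a ≤ b) (ha : ∀ p, Z p ≠ a) :
    ∑ p ∈ univ.filter (fun p => a < Z p ∧ Z p < b), W p =
      empiricalCDF Z W b - empiricalCDF Z W a :=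
  eq_sub_of_add_eq' (empiricalCDF_add_sum_Ioo Z W hab ha)

end EmpiricalCDF

theorem Fin.sum_filter_val_lt_sub {M : Type*} [AddCommGroup M] {n : ℕ} (f : Fin (n + 1) → M)
    (i : Fin (n + 1)) :
    ∑ j ∈ univ.filter (fun j : Fin n => (j : ℕ) < (i : ℕ)), (f j.succ - f j.castSucc) =
      f i - f 0 := by
  cases i using Fin.cases with
  | zero => simp
  | succ k =>
    have hIic : univ.filter (fun j : Fin n => (j : ℕ) < (k.succ : ℕ)) = Iic k := by
      ext j
      simp only [mem_filter, mem_univ, true_and, mem_Iic, Fin.val_succ, Fin.le_def]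
      omega
    rw [hIic, Fin.sum_Iic_sub]

/-- The piecewise-linear cdf built from a histogram is exact at the bin edges: if
`x : Fin (I+1) → ℝ` is a strictly increasing grid, each particle position `Z p` lies
strictly between `x 0` and `x I` and avoids all grid points, and the histogram is
`ρ i = ∑_{p : x i < Z p < x (i+1)} W p`, then for every bin edge `i`,
`∑_{j < i} ρ j = ∑_{p : Z p < x i} W p`. -/
theorem histogram_cdf_exact_at_bin_edges
    (I P : ℕ) (x : Fin (I + 1) → ℝ) (hx : StrictMono x)
    (Z W : Fin P → ℝ)
    (hZ : ∀ p, x 0 < Z p ∧ Z p < x (Fin.last I))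
    (hne : ∀ p i, Z p ≠ x i)
    (ρ : Fin I → ℝ)
    (hρ : ∀ i : Fin I, ρ i =
      ∑ p ∈ Finset.univ.filter (fun p => x i.castSucc < Z p ∧ Z p < x i.succ), W p) :
    ∀ i : Fin (I + 1),
      (∑ j ∈ Finset.univ.filter (fun j : Fin I => (j : ℕ) < (i : ℕ)), ρ j) =
        ∑ p ∈ Finset.univ.filter (fun p => Z p < x i), W p := by
  intro i
  have hbin : ∀ j : Fin I,
      ρ j = empiricalCDF Z W (x j.succ) - empiricalCDF Z W (x j.castSucc) := fun j =>
    (hρ j).trans <| sum_filter_Ioo_eq_empiricalCDF_sub Z W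
      (hx.monotone Fin.castSucc_lt_succ.le) (fun p => hne p _)
  rw [sum_congr rfl fun j _ => hbin j, Fin.sum_filter_val_lt_sub (fun k => empiricalCDF Z W (x k)),
    empiricalCDF_eq_zero_of_forall_le Z W fun p => (hZ p).1.le, sub_zero, empiricalCDF]
end
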